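/- arXiv:2008.10974 — 2 statements merged into one kernel-verified Lean document; each statement's English description precedes it below -/
import Mathlib

section
/- For every real t ≠ 0, |ρ∞(i t)| = |t|^(−1/2) · (2π coth(π|t|/2))^(1/2), where ρ∞(z) := π^(−z/2)Γ(z/2) / (π^(−(1−z)/2)Γ((1−z)/2)). -/
open Complex

noncomputable def rhoInf (z : ℂ) : ℂ :=
  ((Real.pi : ℂ) ^ (-z / 2) * Complex.Gamma (z / 2)) /
    ((Real.pi : ℂ) ^ (-(1 - z) / 2) * Complex.Gamma ((1 - z) / 2))

lemma sqAbsGamma1 (t : ℝ) (ht : t ≠ 0) :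
    (‖Complex.Gamma (Complex.I * t / 2)‖)^2
      = 2 * Real.pi / (t * Real.sinh (Real.pi * t / 2)) := by
  set u : ℂ := Complex.I * t / 2 with hu
  have hconj : (starRingEnd ℂ) u = -u := by
    rw [hu, map_div₀, map_mul, Complex.conj_I, Complex.conj_ofReal, map_ofNat]; ring
  have hune : u ≠ 0 := by
    simp [hu, Complex.ext_iff, ht]
  have hneg : Complex.Gamma (-u) = Complex.Gamma (1 - u) / (-u) := by
    have h1 := Complex.Gamma_add_one (-u) (neg_ne_zero.mpr hune)
    rw [eq_div_iff (neg_ne_zero.mpr hune)]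
    have h2 : (1:ℂ) - u = -u + 1 := by ring
    rw [h2, h1]; ring
  have key : ((‖Complex.Gamma u‖)^2 : ℂ)
      = Complex.Gamma u * Complex.Gamma (1 - u) / (-u) := by
    rw [← Complex.ofReal_pow, Complex.sq_norm, ← Complex.mul_conj, ← Complex.Gamma_conj, hconj, hneg]
    ring
  rw [Complex.Gamma_mul_Gamma_one_sub] at key
  have hsin : Complex.sin ((Real.pi : ℂ) * u) = Real.sinh (Real.pi * t / 2) * Complex.I := by
    have : (Real.pi : ℂ) * u = ((Real.pi * t / 2 : ℝ) : ℂ) * Complex.I := by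
      push_cast [hu]; ring
    rw [this, Complex.sin_mul_I, Complex.ofReal_sinh]
  rw [hsin] at key
  have h2 : ((‖Complex.Gamma u‖)^2 : ℂ)
      = ((2 * Real.pi / (t * Real.sinh (Real.pi * t / 2)) : ℝ) : ℂ) := by
    rw [key]
    have hI : Complex.I ≠ 0 := Complex.I_ne_zero
    have htc : (t : ℂ) ≠ 0 := by exact_mod_cast ht
    by_cases hs : Real.sinh (Real.pi * t / 2) = 0
    · simp [hs]
    · have hsc : ((Real.sinh (Real.pi * t / 2) : ℝ) : ℂ) ≠ 0 := by exact_mod_cast hs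
      have hd : ((Real.sinh (Real.pi * t / 2) : ℝ) : ℂ) * Complex.I * -u
          = ((Real.sinh (Real.pi * t / 2) : ℝ) : ℂ) * t / 2 := by
        rw [hu]; ring_nf; rw [Complex.I_sq]; ring
      rw [div_div, hd]
      push_cast
      field_simp
  exact_mod_cast h2

lemma sqAbsGamma2 (t : ℝ) :
    (‖Complex.Gamma ((1 - Complex.I * t) / 2)‖)^2
      = Real.pi / Real.cosh (Real.pi * t / 2) := by
  set v : ℂ := (1 - Complex.I * t) / 2 with hv
  have hconj : (starRingEnd ℂ) v = 1 - v := by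
    rw [hv, map_div₀, map_sub, map_mul, Complex.conj_I, Complex.conj_ofReal, map_one, map_ofNat]
    ring
  have key : ((‖Complex.Gamma v‖)^2 : ℂ)
      = Complex.Gamma v * Complex.Gamma (1 - v) := by
    rw [← Complex.ofReal_pow, Complex.sq_norm, ← Complex.mul_conj, ← Complex.Gamma_conj, hconj]
  rw [Complex.Gamma_mul_Gamma_one_sub] at key
  have hsinv : Complex.sin ((Real.pi : ℂ) * v) = Real.cosh (Real.pi * t / 2) := by
    have : (Real.pi : ℂ) * v = (Real.pi : ℂ) / 2 - ((Real.pi * t / 2 : ℝ) : ℂ) * Complex.I := by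
      push_cast [hv]; ring
    rw [this, Complex.sin_pi_div_two_sub, Complex.cos_mul_I, Complex.ofReal_cosh]
  rw [hsinv] at key
  have h2 : ((‖Complex.Gamma v‖)^2 : ℂ)
      = ((Real.pi / Real.cosh (Real.pi * t / 2) : ℝ) : ℂ) := by
    rw [key]; push_cast; ring
  exact_mod_cast h2

theorem stmt3 (t : ℝ) (ht : t ≠ 0) :
    ‖rhoInf (Complex.I * t)‖ =
      |t| ^ (-(1 / 2) : ℝ) *
        (2 * Real.pi * (Real.cosh (Real.pi * |t| / 2) / Real.sinh (Real.pi * |t| / 2)))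
          ^ ((1 : ℝ) / 2) := by
  have hpi := Real.pi_pos
  have habs : 0 < |t| := abs_pos.mpr ht
  have hsinh : 0 < Real.sinh (Real.pi * |t| / 2) := Real.sinh_pos_iff.mpr (by positivity)
  have hcosh : 0 < Real.cosh (Real.pi * |t| / 2) := Real.cosh_pos _
  -- evaluate abs of rhoInf
  have hnum : ‖(Real.pi : ℂ) ^ (-(Complex.I * t) / 2)‖ = 1 := by
    rw [Complex.norm_cpow_eq_rpow_re_of_pos hpi]
    have : (-(Complex.I * t) / 2).re = 0 := by simp
    rw [this, Real.rpow_zero]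
  have hden : ‖(Real.pi : ℂ) ^ (-(1 - Complex.I * t) / 2)‖
      = Real.pi ^ (-(1/2) : ℝ) := by
    rw [Complex.norm_cpow_eq_rpow_re_of_pos hpi]
    congr 1
    simp
    norm_num
  have hL : ‖rhoInf (Complex.I * t)‖
      = ‖Complex.Gamma (Complex.I * t / 2)‖ /
        (Real.pi ^ (-(1/2) : ℝ) * ‖Complex.Gamma ((1 - Complex.I * t) / 2)‖) := by
    rw [rhoInf, norm_div, norm_mul, norm_mul, hnum, hden, one_mul]
  -- evenness: |Γ(it/2)|² with |t|
  have hG1 : (‖Complex.Gamma (Complex.I * t / 2)‖)^2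
      = 2 * Real.pi / (|t| * Real.sinh (Real.pi * |t| / 2)) := by
    rw [sqAbsGamma1 t ht]
    rcases abs_cases t with ⟨h1, _⟩ | ⟨h1, _⟩
    · rw [h1]
    · rw [h1]
      have : Real.pi * t / 2 = -(Real.pi * -t / 2) := by ring
      rw [this, Real.sinh_neg]
      ring
  have hG2 : (‖Complex.Gamma ((1 - Complex.I * t) / 2)‖)^2
      = Real.pi / Real.cosh (Real.pi * |t| / 2) := by
    rw [sqAbsGamma2 t]
    rcases abs_cases t with ⟨h1, _⟩ | ⟨h1, _⟩
    · rw [h1]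
    · rw [h1]
      have : Real.pi * t / 2 = -(Real.pi * -t / 2) := by ring
      rw [this, Real.cosh_neg]
  -- compare squares
  have hRnn : 0 ≤ |t| ^ (-(1 / 2) : ℝ) *
        (2 * Real.pi * (Real.cosh (Real.pi * |t| / 2) / Real.sinh (Real.pi * |t| / 2)))
          ^ ((1 : ℝ) / 2) := by positivity
  have hLnn : 0 ≤ ‖rhoInf (Complex.I * t)‖ := norm_nonneg _
  have hsq : (‖rhoInf (Complex.I * t)‖)^2
      = (|t| ^ (-(1 / 2) : ℝ) *
        (2 * Real.pi * (Real.cosh (Real.pi * |t| / 2) / Real.sinh (Real.pi * |t| / 2)))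
          ^ ((1 : ℝ) / 2))^2 := by
    rw [hL]
    rw [div_pow, mul_pow, hG1, hG2]
    rw [mul_pow]
    rw [← Real.rpow_natCast (|t| ^ (-(1 / 2) : ℝ)) 2, ← Real.rpow_natCast (_ ^ ((1:ℝ)/2)) 2,
      ← Real.rpow_mul habs.le, ← Real.rpow_mul (by positivity)]
    norm_num
    rw [← Real.rpow_natCast (Real.pi ^ (-(1/2) : ℝ)) 2, ← Real.rpow_mul hpi.le]
    norm_num
    rw [Real.rpow_neg_one, Real.rpow_neg_one]
    field_simp
  nlinarith [hsq, hRnn, hLnn]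
end

section
/- For each natural number n, the function ρ∞(z) = 2 cos(πz/2)(2π)^(−z)Γ(z) has a simple pole at z = −2n with residue (−1)^n · 2π^(2n+1/2) / (Γ(n+1)Γ(n+1/2)). Equivalently, ρ∞(z) − (−1)^n · (2π^(2n+1/2)/(Γ(n+1)Γ(n+1/2))) · 1/(z+2n) is bounded near z = −2n. -/
open Complex

private lemma gamma_prod (n : ℕ) (s : ℂ) (h : ∀ k : ℕ, k ≤ n → s + k ≠ 0) :
    Complex.Gamma (s + (n + 1)) =
      (∏ k ∈ Finset.range (n + 1), (s + k)) * Complex.Gamma s := by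
  induction n with
  | zero =>
    simp only [Nat.cast_zero, zero_add, Finset.prod_range_one, add_zero]
    exact Complex.Gamma_add_one s (by simpa using h 0 le_rfl)
  | succ m ih =>
    have h1 : s + (m + 1 : ℕ) ≠ 0 := by
      have := h (m + 1) le_rfl
      simpa using this
    have : s + ((m + 1 : ℕ) + 1) = (s + (m + 1 : ℕ)) + 1 := by push_cast; ring
    rw [this, Complex.Gamma_add_one _ h1, Finset.prod_range_succ]
    have ih' := ih (fun k hk => h k (hk.trans (Nat.le_succ m)))
    push_cast at ih' ⊢
    rw [ih']
    ring

private lemma prod_sub_eq_factorial (n : ℕ) :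
    (∏ k ∈ Finset.range n, ((n : ℂ) - k)) = (n.factorial : ℂ) := by
  induction n with
  | zero => simp
  | succ m ih =>
    rw [Finset.prod_range_succ']
    have h1 : ∀ k ∈ Finset.range m, (((m + 1 : ℕ) : ℂ) - ((k : ℕ) + 1 : ℕ)) = ((m : ℂ) - k) := by
      intro k _; push_cast; ring
    rw [Finset.prod_congr rfl h1, ih, Nat.factorial_succ]
    push_cast
    ring

private noncomputable def rhoAux (n : ℕ) (z : ℂ) : ℂ :=
  2 * ((Real.pi : ℂ) ^ (-z / 2) * Complex.Gamma (z / 2 + n + 1)) /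
    ((Real.pi : ℂ) ^ (-(1 - z) / 2) * Complex.Gamma ((1 - z) / 2) *
      ∏ k ∈ Finset.range n, (z / 2 + k))

set_option maxHeartbeats 1000000 in
theorem stmt4 (n : ℕ) :
    ∃ C > (0 : ℝ), ∃ δ > (0 : ℝ), ∀ z : ℂ, z ≠ -2 * (n : ℂ) →
      ‖z + 2 * n‖ < δ →
      ‖rhoInf z -
        ((-1 : ℂ) ^ n * 2 * ((Real.pi ^ (2 * (n : ℝ) + 1 / 2) : ℝ) : ℂ) /
          (Complex.Gamma ((n : ℂ) + 1) * Complex.Gamma ((n : ℂ) + 1 / 2))) *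
          (z + 2 * n)⁻¹‖ ≤ C := by
  have hπ : (Real.pi : ℂ) ≠ 0 := ofReal_ne_zero.mpr Real.pi_ne_zero
  set c : ℂ := -2 * (n : ℂ) with hc
  set A : ℂ → ℂ := rhoAux n with hA
  -- the residue equals A c
  set r : ℂ := (-1 : ℂ) ^ n * 2 * ((Real.pi ^ (2 * (n : ℝ) + 1 / 2) : ℝ) : ℂ) /
      (Complex.Gamma ((n : ℂ) + 1) * Complex.Gamma ((n : ℂ) + 1 / 2)) with hr
  -- facts at the point c
  have hprod_c : (∏ k ∈ Finset.range n, (c / 2 + (k : ℂ))) = (-1) ^ n * (n.factorial : ℂ) := by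
    have : ∀ k ∈ Finset.range n, (c / 2 + (k : ℂ)) = (-1) * ((n : ℂ) - k) := by
      intro k _; rw [hc]; push_cast; ring
    rw [Finset.prod_congr rfl this, Finset.prod_mul_distrib, Finset.prod_const,
      prod_sub_eq_factorial]
    simp
  have hΓhalf : Complex.Gamma ((n : ℂ) + 1 / 2) ≠ 0 := by
    apply Complex.Gamma_ne_zero
    intro m h
    have := congrArg Complex.re h
    simp at this
    have h1 : (0:ℝ) < (n : ℝ) + 1/2 := by positivity
    have h2 : (n : ℝ) + 1/2 = -(m : ℝ) := by
      rw [← this]; push_cast; ring_nf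
    nlinarith [Nat.cast_nonneg (α := ℝ) m]
  have hfact : (Complex.Gamma ((n : ℂ) + 1)) = (n.factorial : ℂ) := by
    simpa using Complex.Gamma_nat_eq_factorial n
  have hfact_ne : ((n.factorial : ℕ) : ℂ) ≠ 0 := Nat.cast_ne_zero.mpr (Nat.factorial_ne_zero n)
  -- value of A at c
  have hAc : A c = r := by
    rw [hA, rhoAux, hprod_c]
    have h1 : c / 2 + n + 1 = 1 := by rw [hc]; push_cast; ring
    have h2 : (1 - c) / 2 = (n : ℂ) + 1 / 2 := by rw [hc]; push_cast; ring
    have h3 : -c / 2 = (n : ℂ) := by rw [hc]; push_cast; ring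
    have h4 : -(1 - c) / 2 = -((n : ℂ) + 1 / 2) := by rw [hc]; push_cast; ring
    rw [h1, h2, h3, h4, Complex.Gamma_one, hr, hfact]
    have h5 : ((Real.pi ^ (2 * (n : ℝ) + 1 / 2) : ℝ) : ℂ) =
        (Real.pi : ℂ) ^ ((2 * (n : ℝ) + 1 / 2 : ℝ) : ℂ) :=
      Complex.ofReal_cpow Real.pi_pos.le _
    have h6 : (Real.pi : ℂ) ^ ((2 * (n : ℝ) + 1 / 2 : ℝ) : ℂ) =
        (Real.pi : ℂ) ^ (n : ℂ) * (Real.pi : ℂ) ^ ((n : ℂ) + 1 / 2) := by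
      rw [← Complex.cpow_add _ _ hπ]
      congr 1
      push_cast; ring
    have h7 : (Real.pi : ℂ) ^ (-((n : ℂ) + 1 / 2)) =
        ((Real.pi : ℂ) ^ ((n : ℂ) + 1 / 2))⁻¹ := by
      rw [Complex.cpow_neg]
    have h8 : (Real.pi : ℂ) ^ ((n : ℂ) + 1 / 2) ≠ 0 := by
      intro h
      rw [Complex.cpow_eq_zero_iff] at h
      exact hπ h.1
    rw [h5, h6, h7]
    field_simp
    ring_nf
    rw [pow_mul', neg_one_sq, one_pow, mul_one]
  -- A is differentiable at c
  have hdiffA : DifferentiableAt ℂ A c := by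
    rw [hA]
    unfold rhoAux
    apply DifferentiableAt.div
    · apply DifferentiableAt.const_mul
      apply DifferentiableAt.mul
      · exact (differentiableAt_id.neg.div_const 2).const_cpow (Or.inl hπ)
      · have h1 : c / 2 + n + 1 = 1 := by rw [hc]; push_cast; ring
        have : DifferentiableAt ℂ Complex.Gamma (c / 2 + n + 1) := by
          rw [h1]
          exact Complex.differentiableAt_Gamma 1 (fun m => by
            intro h
            have := congrArg Complex.re h
            simp at this
            nlinarith [Nat.cast_nonneg (α := ℝ) m])
        exact this.comp c (by fun_prop)
    · apply DifferentiableAt.mul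
      apply DifferentiableAt.mul
      · exact ((differentiableAt_const _).sub differentiableAt_id).neg.div_const 2
          |>.const_cpow (Or.inl hπ)
      · have h2 : (1 - c) / 2 = (n : ℂ) + 1 / 2 := by rw [hc]; push_cast; ring
        have : DifferentiableAt ℂ Complex.Gamma ((1 - c) / 2) := by
          rw [h2]
          refine Complex.differentiableAt_Gamma _ (fun m => ?_)
          intro h
          have := congrArg Complex.re h
          simp at this
          have h2' : (n : ℝ) + 1/2 = -(m : ℝ) := by rw [← this]; push_cast; ring_nf
          nlinarith [Nat.cast_nonneg (α := ℝ) m]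
        exact this.comp c (by fun_prop)
      · exact DifferentiableAt.fun_finsetProd (fun k _ => by fun_prop)
    · -- denominator nonzero at c
      have h2 : (1 - c) / 2 = (n : ℂ) + 1 / 2 := by rw [hc]; push_cast; ring
      rw [hprod_c, h2]
      have hcp : (Real.pi : ℂ) ^ (-(1 - c) / 2) ≠ 0 := by
        intro h
        rw [Complex.cpow_eq_zero_iff] at h
        exact hπ h.1
      exact mul_ne_zero (mul_ne_zero hcp hΓhalf)
        (mul_ne_zero (by simp) hfact_ne)
  -- key identity: rhoInf z = A z / (z - c) for z near c, z ≠ c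
  have hkey : ∀ z : ℂ, z ≠ c → ‖z - c‖ < 1 →
      rhoInf z = A z / (z - c) := by
    intro z hz hzlt
    have hne : ∀ k : ℕ, k ≤ n → z / 2 + k ≠ 0 := by
      intro k hk h
      rcases eq_or_lt_of_le hk with h' | h'
      · subst h'
        apply hz
        have : z = -2 * (k : ℂ) := by linear_combination 2 * h
        rw [this, hc]
      · have : z - c = 2 * ((n : ℂ) - k) := by
          rw [hc]; linear_combination 2 * h
        rw [this] at hzlt
        have h2 : ‖(2 : ℂ) * ((n : ℂ) - k)‖ = 2 * |(n : ℝ) - k| := by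
          rw [norm_mul]
          have : ((n : ℂ) - k) = (((n : ℝ) - k : ℝ) : ℂ) := by push_cast; ring
          rw [this, Complex.norm_real, Real.norm_eq_abs]
          simp
        rw [h2] at hzlt
        have h3 : (1 : ℝ) ≤ |(n : ℝ) - k| := by
          rw [abs_of_pos (by exact_mod_cast sub_pos.mpr (by exact_mod_cast h' : (k:ℝ) < n))]
          have : (k : ℝ) + 1 ≤ n := by exact_mod_cast h'
          linarith
        linarith
    have hG := gamma_prod n (z / 2) hne
    have hΓden : Complex.Gamma ((1 - z) / 2) ≠ 0 := by
      apply Complex.Gamma_ne_zero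
      intro m h
      have : z - c = 2 * ((n : ℂ) + m) + 1 := by
        rw [hc]; linear_combination (-2 : ℂ) * h
      rw [this] at hzlt
      have h2 : (2 * ((n : ℂ) + m) + 1) = (((2 * ((n:ℝ) + m) + 1 : ℝ)) : ℂ) := by
        push_cast; ring
      rw [h2, Complex.norm_real, Real.norm_eq_abs] at hzlt
      have : (1:ℝ) ≤ |2 * ((n:ℝ) + m) + 1| := by
        rw [abs_of_pos (by positivity)]
        have : (0:ℝ) ≤ (n:ℝ) + m := by positivity
        linarith
      linarith
    have hΓz : Complex.Gamma (z / 2) =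
        Complex.Gamma (z / 2 + (n + 1)) / ∏ k ∈ Finset.range (n + 1), (z / 2 + k) := by
      have hP : (∏ k ∈ Finset.range (n + 1), (z / 2 + (k : ℂ))) ≠ 0 :=
        Finset.prod_ne_zero_iff.mpr
          (fun k hk => hne k (Nat.lt_succ_iff.mp (Finset.mem_range.mp hk)))
      rw [hG]
      exact (mul_div_cancel_left₀ _ hP).symm
    have hprod_split : (∏ k ∈ Finset.range (n + 1), (z / 2 + k)) =
        (∏ k ∈ Finset.range n, (z / 2 + k)) * (z / 2 + n) := Finset.prod_range_succ _ _
    have hzc : z - c = 2 * (z / 2 + n) := by rw [hc]; ring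
    have hne_n : z / 2 + (n : ℂ) ≠ 0 := hne n le_rfl
    have hprod_ne : (∏ k ∈ Finset.range n, (z / 2 + k)) ≠ 0 :=
      Finset.prod_ne_zero_iff.mpr (fun k hk => hne k (Finset.mem_range.mp hk).le)
    have hcp1 : (Real.pi : ℂ) ^ (-(1 - z) / 2) ≠ 0 := by
      intro h
      rw [Complex.cpow_eq_zero_iff] at h
      exact hπ h.1
    rw [hA]
    unfold rhoInf rhoAux
    rw [hΓz, hprod_split]
    have harg : z / 2 + (↑n + 1) = z / 2 + ↑n + 1 := by ring
    rw [harg, hzc]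
    have key : ∀ a G D P w : ℂ, D ≠ 0 → P ≠ 0 → w ≠ 0 →
        a * (G / (P * w)) / D = 2 * (a * G) / (D * P) / (2 * w) := by
      intro a G D P w hD hP hw
      field_simp
    exact key _ _ _ _ _ (mul_ne_zero hcp1 hΓden) hprod_ne hne_n
  -- conclude via boundedness of the difference quotient
  have hslope := hasDerivAt_iff_tendsto_slope.mp hdiffA.hasDerivAt
  have habs : Filter.Tendsto (fun z => ‖slope A c z‖) (nhdsWithin c {c}ᶜ)
      (nhds (‖deriv A c‖)) :=
    (continuous_norm.tendsto _).comp hslope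
  have hev : ∀ᶠ z in nhdsWithin c {c}ᶜ,
      ‖slope A c z‖ ≤ ‖deriv A c‖ + 1 :=
    habs.eventually_le_const (lt_add_one _)
  have hball : ∀ᶠ z in nhdsWithin c {c}ᶜ, ‖z - c‖ < 1 := by
    apply Filter.eventually_iff_exists_mem.mpr
    refine ⟨Metric.ball c 1, mem_nhdsWithin_of_mem_nhds (Metric.ball_mem_nhds c one_pos), ?_⟩
    intro z hz
    rw [Metric.mem_ball, Complex.dist_eq] at hz
    exact hz
  obtain ⟨s, hs_mem, hs⟩ := Filter.eventually_iff_exists_mem.mp (hev.and hball)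
  rw [Metric.mem_nhdsWithin_iff] at hs_mem
  obtain ⟨δ, hδ, hδsub⟩ := hs_mem
  refine ⟨‖deriv A c‖ + 1, by positivity, δ, hδ, fun z hz hzδ => ?_⟩
  have hzc' : z - c = z + 2 * n := by rw [hc]; ring
  have hzmem : z ∈ s := by
    apply hδsub
    constructor
    · rw [Metric.mem_ball, Complex.dist_eq, hzc']
      exact hzδ
    · exact hz
  obtain ⟨h1, h2⟩ := hs z hzmem
  have heq : rhoInf z - r * (z + 2 * n)⁻¹ = slope A c z := by
    rw [slope_def_field, ← hAc, hkey z hz h2, hzc']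
    have hzne : z + 2 * (n : ℂ) ≠ 0 := by
      intro h
      apply hz
      rw [hc]
      linear_combination h
    field_simp
  rw [heq]
  exact h1
end
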